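/- arXiv:2209.05908 — 3 statements merged into one kernel-verified Lean document; each statement's English description precedes it below -/
import Mathlib

section
/- For every permutation τ of {1,…,n}, the map φ(τ) : [n] → {0,1}^n given by φ(τ)(k)_i = (0 if k < τ(i), 1 otherwise) is strictly monotone (injective as a monotone map), i.e. the corresponding n-simplex of the n-cube is nondegenerate. -/
/-- The n-simplex phi(tau) of the n-cube associated with a permutation tau of
{1, ..., n} (encoded 0-based as `Equiv.Perm (Fin n)`): its i-th coordinate is the
monotone map `a^{tau(i)} : [n] -> {0,1}`, sending k to 0 iff k < tau(i) (1-based),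
i.e. iff k <= tau(i) (0-based). -/
def phi (n : ℕ) (τ : Equiv.Perm (Fin n)) : Fin (n + 1) → Fin n → Fin 2 :=
  fun k i => if (k : ℕ) ≤ (τ i : ℕ) then 0 else 1

theorem phi_monotone (n : ℕ) (τ : Equiv.Perm (Fin n)) : Monotone (phi n τ) := by
  intro k k' hkk' i
  simp only [phi]
  split_ifs <;> first | exact le_rfl | exact Fin.zero_le _ | omega

theorem phi_apply_symm (n : ℕ) (τ : Equiv.Perm (Fin n)) (k : Fin (n + 1)) (j : Fin n) :
    phi n τ k (τ.symm j) = if (k : ℕ) ≤ j then 0 else 1 := by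
  simp only [phi, Equiv.apply_symm_apply]

/-- For `k < k'`, the coordinate `τ⁻¹ k` is where `φ(τ)` jumps from `0` to `1`. -/
theorem phi_ne_of_lt (n : ℕ) (τ : Equiv.Perm (Fin n)) {k k' : Fin (n + 1)} (hkk' : k < k') :
    phi n τ k ≠ phi n τ k' := by
  have hk : (k : ℕ) < n := by omega
  intro heq
  have h := congrFun heq (τ.symm ⟨k, hk⟩)
  rw [phi_apply_symm, phi_apply_symm, if_pos le_rfl, if_neg (by simpa using hkk')] at h
  exact absurd h (by decide)

/-- for every permutation tau of {1,...,n}, the map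
phi(tau) : [n] -> {0,1}^n (with {0,1}^n ordered coordinatewise) is strictly monotone,
i.e. the corresponding n-simplex of the n-cube is nondegenerate. -/
theorem stmt_2 (n : ℕ) (τ : Equiv.Perm (Fin n)) : StrictMono (phi n τ) :=
  fun _ _ hkk' => (phi_monotone n τ hkk'.le).lt_of_ne (phi_ne_of_lt n τ hkk')
end

section
/- Let τ ∈ S_n and let 0 < i < n. Set j = τ⁻¹(i) and j' = τ⁻¹(i+1), and let γ be the transposition of j and j'. Then the i-th faces of the n-simplices φ(τ) and φ(τ∘γ) of the n-cube coincide: φ(τ) ∘ ∂_i = φ(τ∘γ) ∘ ∂_i as maps [n−1] → {0,1}^n. -/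
theorem Equiv.swap_apply_iff_of_iff {α : Type*} [DecidableEq α] {P : α → Prop} {a b : α}
    (h : P a ↔ P b) (x : α) : P (swap a b x) ↔ P x := by
  rcases eq_or_ne x a with rfl | hxa
  · rw [swap_apply_left, h]
  rcases eq_or_ne x b with rfl | hxb
  · rw [swap_apply_right, h]
  · rw [swap_apply_of_ne_of_ne hxa hxb]

theorem phi_swap_mul {n : ℕ} (τ : Equiv.Perm (Fin n)) {a b : Fin n} {k : Fin (n + 1)}
    (h : (k : ℕ) ≤ a ↔ (k : ℕ) ≤ b) : phi n (Equiv.swap a b * τ) k = phi n τ k := by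
  funext m
  exact if_congr (Equiv.swap_apply_iff_of_iff (P := fun c : Fin n ↦ (k : ℕ) ≤ c) h (τ m)) rfl rfl

/-- let tau be a permutation of {1,...,n} and 0 < i < n.  Set
j = tau^{-1}(i), j' = tau^{-1}(i+1) (values encoded 0-based as i-1, i), and let gamma
be the transposition of j and j'.  Then the i-th faces of the n-simplices phi(tau) and
phi(tau . gamma) of the n-cube coincide: phi(tau) . d_i = phi(tau gamma) . d_i. -/
theorem stmt_5 (n i : ℕ) (hn : i < n) (τ : Equiv.Perm (Fin n)) :
    phi n τ ∘ (⟨i, by omega⟩ : Fin (n + 1)).succAbove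
      = phi n (τ * Equiv.swap (τ⁻¹ ⟨i - 1, by omega⟩) (τ⁻¹ ⟨i, by omega⟩))
        ∘ (⟨i, by omega⟩ : Fin (n + 1)).succAbove := by
  funext k
  rw [Function.comp_apply, Function.comp_apply, Equiv.mul_swap_eq_swap_mul, Equiv.Perm.coe_inv,
    Equiv.apply_symm_apply, Equiv.apply_symm_apply, phi_swap_mul]
  have hk : ((⟨i, by omega⟩ : Fin (n + 1)).succAbove k : ℕ) ≠ i :=
    Fin.val_ne_of_ne (Fin.succAbove_ne _ k)
  dsimp only
  omega
end

section
/- For every proper subset T ⊊ [n] with {0, n} ⊆ T, the inclusion of the union of faces Λ^n_T = ⋃_{t∈T} d_t Δ^n into Δ^n is an inner anodyne map of simplicial sets. -/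
open CategoryTheory GrothendieckTopology Simplicial SSet

universe u

/-- The generalized horn Lambda^n_T, for a set T of vertices of the standard n-simplex:
the union of the faces d_t Delta^n for t in T, as a subpresheaf of Delta^n.  A simplex
alpha belongs to it iff some t in T is missed by alpha. -/
def genHorn (n : ℕ) (T : Set (Fin (n + 1))) : Subfunctor Δ[n] where
  obj m := {α | ∃ t ∈ T, t ∉ Set.range (stdSimplex.asOrderHom α)}
  map := by
    intro m₁ m₂ f α hα
    obtain ⟨t, ht, ht'⟩ := hα
    refine ⟨t, ht, fun hmem => ht' ?_⟩
    exact Set.range_comp_subset_range _ _ hmem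

/-- A map of simplicial sets is inner anodyne iff it has the left lifting property with
respect to every map having the right lifting property with respect to all inner horn
inclusions (this characterizes the weakly saturated class generated by the inner horn
inclusions). -/
def InnerAnodyne {X Y : SSet.{u}} (f : X ⟶ Y) : Prop :=
  ∀ ⦃S T : SSet.{u}⦄ (p : S ⟶ T),
    (∀ (m : ℕ) (i : Fin (m + 1)), 0 < (i : ℕ) → (i : ℕ) < m →
      HasLiftingProperty (Λ[m, i].ι) p) →
    HasLiftingProperty f p

/-! Induction on the number of vertices missing from `T`. If `T` misses only `i`, then `Λ^n_T`
is the horn `Λ^n_i`, which is inner since `0, n ∈ T`. Otherwise pick a missing vertex `i`: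
`Λ^n_{T ∪ {i}} = Λ^n_T ∪ d_iΔ^n` and `d_i` pulls `Λ^n_T` back to `Λ^{n-1}_{d_i⁻¹ T}`, so
`Λ^n_T ⊆ Λ^n_{T ∪ {i}}` is a pushout of `Λ^{n-1}_{d_i⁻¹ T} ⊆ Δ^{n-1}`. Both this inclusion and
`Λ^n_{T ∪ {i}} ⊆ Δ^n` miss one vertex fewer. -/

lemma Fin.ncard_preimage_succAbove {n : ℕ} (i : Fin (n + 1)) (s : Set (Fin (n + 1))) :
    (i.succAbove ⁻¹' s).ncard = (s \ {i}).ncard := by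
  rw [← Set.ncard_preimage_of_injective_subset_range (Fin.succAbove_right_injective (p := i))
    (by simp [Fin.range_succAbove])]
  congr 1
  ext j
  simp [Fin.succAbove_ne]

lemma innerAnodyne_iff {X Y : SSet.{u}} (f : X ⟶ Y) :
    InnerAnodyne f ↔ innerAnodyneExtensions f := by
  constructor
  · intro hf _ _ p hp
    exact hf p fun _ i h0 hm ↦
      hp _ (horn_ι_mem_innerHornInclusions h0 (by simpa [Fin.lt_def] using hm))
  · intro hf _ _ p hp
    exact hf p fun _ _ _ ⟨i, h0, hn⟩ ↦ hp _ i h0 (by simpa [Fin.lt_def] using hn)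

namespace SSet.Subcomplex

variable {X Y : SSet.{u}}

lemma image_preimage_eq_inf_range (A : X.Subcomplex) (f : Y ⟶ X) :
    (A.preimage f).image f = A ⊓ range f :=
  le_antisymm (le_inf (image_preimage_le A f) (image_le_range _ f))
    (by rintro m _ ⟨hx, y, rfl⟩; exact ⟨y, hx, rfl⟩)

instance (A : X.Subcomplex) (f : Y ⟶ X) [Mono f] : IsIso ((A.preimage f).toImage f) :=
  have : Mono ((A.preimage f).toImage f) := mono_of_mono_fac (toImage_ι _ _)
  isIso_of_mono_of_epi _

noncomputable def preimageArrowIso (A : X.Subcomplex) (f : Y ⟶ X) [Mono f] :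
    Arrow.mk (A.preimage f).ι ≅ Arrow.mk (homOfLE (inf_le_right : A ⊓ range f ≤ range f)) :=
  Arrow.isoMk
    (asIso ((A.preimage f).toImage f) ≪≫ Subcomplex.eqToIso (image_preimage_eq_inf_range A f))
    (asIso (toRange f)) (by rw [← cancel_mono (range f).ι]; simp)

lemma homOfLE_le_sup_range_mem (W : MorphismProperty SSet.{u}) [W.IsStableUnderCobaseChange]
    [W.RespectsIso] (A : X.Subcomplex) (f : Y ⟶ X) [Mono f] (h : W (A.preimage f).ι) :
    W (homOfLE (le_sup_left : A ≤ A ⊔ range f)) :=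
  W.of_isPushout (BicartSq.isPushout (A₁ := A ⊓ range f) ⟨rfl, rfl⟩)
    ((W.arrow_mk_iso_iff (preimageArrowIso A f)).1 h)

end SSet.Subcomplex

lemma genHorn_compl_singleton (n : ℕ) (i : Fin (n + 1)) : genHorn.{u} n {i}ᶜ = Λ[n, i] := by
  ext m α
  simp [genHorn, mem_horn_iff, Set.eq_univ_iff_forall]

lemma genHorn_insert (n : ℕ) (i : Fin (n + 1)) (T : Set (Fin (n + 1))) :
    genHorn.{u} n (insert i T) = genHorn n T ⊔ stdSimplex.face {i}ᶜ := by
  ext m α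
  simp [genHorn, stdSimplex.face_obj]
  exact or_comm

lemma genHorn_preimage_δ {m : ℕ} {i : Fin (m + 2)} {T : Set (Fin (m + 2))} (hi : i ∉ T) :
    Subcomplex.preimage (genHorn.{u} (m + 1) T) (stdSimplex.δ i) =
      genHorn m (i.succAbove ⁻¹' T) := by
  ext k α
  change (∃ t ∈ T, t ∉ Set.range (i.succAbove ∘ stdSimplex.asOrderHom α)) ↔ _
  rw [Set.range_comp]
  constructor
  · rintro ⟨t, ht, ht'⟩
    obtain ⟨s, rfl⟩ := Fin.exists_succAbove_eq (ne_of_mem_of_not_mem ht hi)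
    exact ⟨s, ht, fun hs ↦ ht' (Set.mem_image_of_mem _ hs)⟩
  · rintro ⟨s, hs, hs'⟩
    exact ⟨i.succAbove s, hs, Fin.succAbove_right_injective.mem_set_image.not.2 hs'⟩

lemma innerAnodyneExtensions_genHorn_ι_of_insert {m : ℕ} {i : Fin (m + 2)}
    {T : Set (Fin (m + 2))} (hi : i ∉ T)
    (hface : innerAnodyneExtensions (genHorn.{u} m (i.succAbove ⁻¹' T)).ι)
    (hinsert : innerAnodyneExtensions (genHorn.{u} (m + 1) (insert i T)).ι) :
    innerAnodyneExtensions (genHorn.{u} (m + 1) T).ι := by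
  rw [genHorn_insert, ← stdSimplex.range_δ] at hinsert
  exact MorphismProperty.comp_mem _ _ _
    (Subcomplex.homOfLE_le_sup_range_mem _ _ _ (genHorn_preimage_δ hi ▸ hface)) hinsert

theorem innerAnodyneExtensions_genHorn_ι_of_ncard_compl (k : ℕ) :
    ∀ {n : ℕ} {T : Set (Fin (n + 1))}, 0 ∈ T → Fin.last n ∈ T → Tᶜ.ncard = k + 1 →
      innerAnodyneExtensions (genHorn.{u} n T).ι := by
  induction k with
  | zero =>
    intro n T h0 hn hk
    obtain ⟨i, hi⟩ := Set.ncard_eq_one.1 hk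
    obtain rfl : {i}ᶜ = T := compl_eq_comm.1 hi
    rw [genHorn_compl_singleton]
    exact innerAnodyneExtensions.horn_ι (Fin.pos_iff_ne_zero.2 (Ne.symm h0))
      (Fin.lt_last_iff_ne_last.2 (Ne.symm hn))
  | succ k ih =>
    intro n T h0 hn hk
    obtain ⟨i, hi⟩ := Set.nonempty_of_ncard_ne_zero (s := Tᶜ) (by omega)
    have hi0 : i ≠ 0 := fun h ↦ hi (h ▸ h0)
    have hin : i ≠ Fin.last n := fun h ↦ hi (h ▸ hn)
    obtain ⟨m, rfl⟩ : ∃ m, n = m + 1 :=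
      Nat.exists_eq_succ_of_ne_zero (by rintro rfl; exact hi0 (Fin.fin_one_eq_zero i))
    have hcard : (Tᶜ \ {i}).ncard = k + 1 := by
      rw [Set.ncard_sdiff_singleton_of_mem hi, hk]
      rfl
    refine innerAnodyneExtensions_genHorn_ι_of_insert hi (ih ?_ ?_ ?_) (ih ?_ ?_ ?_)
    · rwa [Set.mem_preimage, Fin.succAbove_ne_zero_zero hi0]
    · rwa [Set.mem_preimage, Fin.succAbove_ne_last_last hin]
    · rwa [← Set.preimage_compl, Fin.ncard_preimage_succAbove]
    · exact Set.mem_insert_of_mem _ h0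
    · exact Set.mem_insert_of_mem _ hn
    · rwa [Set.insert_eq, Set.compl_union, Set.inter_comm, ← Set.sdiff_eq]

/-- for every proper subset T of [n] containing 0 and n, the inclusion of
the generalized horn Lambda^n_T (the union of the faces d_t Delta^n, t in T) into
Delta^n is inner anodyne. -/
theorem stmt_12 (n : ℕ) (T : Set (Fin (n + 1))) (h0 : 0 ∈ T) (hn : Fin.last n ∈ T)
    (hT : T ≠ Set.univ) :
    InnerAnodyne (genHorn n T).ι := by
  obtain ⟨k, hk⟩ : ∃ k, Tᶜ.ncard = k + 1 :=
    Nat.exists_eq_succ_of_ne_zero ((Set.ncard_pos (Set.toFinite _)).2 (Set.nonempty_compl.2 hT)).ne'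
  exact (innerAnodyne_iff _).2 (innerAnodyneExtensions_genHorn_ι_of_ncard_compl k h0 hn hk)
end
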